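/- arXiv:1904.07557 — 4 statements merged into one kernel-verified Lean document; each statement's English description precedes it below -/
import Mathlib

section
/- Let f : X → X have index i ≥ 1 and period p, i.e., f^(p+i) = f^i with i, p minimal (p ≥ 1, i minimal such that f^l = f^i for some l > i). Let r := τ ∘ (f × f) be the Lyubashenko map, where τ is the twist. If p is even then r^(p+i) = r^i, while if p is odd then r^(2p+i) = r^i. In both cases r is of finite order. -/
/-- The index of a map: the least `j` such that `f^[l] = f^[j]` for some `l > j`. -/
noncomputable def mapInd {A : Type*} (f : A → A) : ℕ := sInf {j | ∃ l, j < l ∧ f^[l] = f^[j]}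

/-- The period of a map: the least `p ≥ 1` with `f^[p + mapInd f] = f^[mapInd f]`. -/
noncomputable def mapPer {A : Type*} (f : A → A) : ℕ :=
  sInf {p | 1 ≤ p ∧ f^[p + mapInd f] = f^[mapInd f]}

/-- A map is of finite order if `f^[p+i] = f^[i]` for some `p ≥ 1`, `i ≥ 0`. -/
def MapFiniteOrder {A : Type*} (f : A → A) : Prop :=
  ∃ p, 1 ≤ p ∧ ∃ i, f^[p + i] = f^[i]

/-!
Since the twist `τ` is an involution commuting with `f × f`, we have `r^n = τ^n ∘ (f × f)^n`,
so `r^(n+i) = r^i` as soon as `n` is even and `f^(n+i) = f^i`. Take `n = p` when `p` is even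
and `n = 2p` otherwise.
-/

open Function

theorem Function.iterate_two_mul_add_eq {α : Type*} {f : α → α} {p i : ℕ}
    (h : f^[p + i] = f^[i]) : f^[2 * p + i] = f^[i] := by
  rw [two_mul, add_assoc, iterate_add, h, ← iterate_add, h]

theorem Function.Involutive.iterate_comp_add_eq {α : Type*} {τ g : α → α} (hτ : Involutive τ)
    (hcomm : Function.Commute τ g) {n i : ℕ} (hn : Even n) (hg : g^[n + i] = g^[i]) :
    (τ ∘ g)^[n + i] = (τ ∘ g)^[i] := by
  rw [hcomm.comp_iterate, hcomm.comp_iterate, hg, iterate_add τ, hτ.iterate_even hn, id_comp]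

namespace MapFiniteOrder

variable {A : Type*} {f : A → A}

theorem exists_iterate_eq_iterate_mapInd (hf : MapFiniteOrder f) :
    ∃ l, mapInd f < l ∧ f^[l] = f^[mapInd f] := by
  obtain ⟨p, hp, i, h⟩ := hf
  exact Nat.sInf_mem (s := {j | ∃ l, j < l ∧ f^[l] = f^[j]}) ⟨i, p + i, by omega, h⟩

theorem one_le_mapPer_and_iterate_mapPer_add (hf : MapFiniteOrder f) :
    1 ≤ mapPer f ∧ f^[mapPer f + mapInd f] = f^[mapInd f] := by
  obtain ⟨l, hl, h⟩ := hf.exists_iterate_eq_iterate_mapInd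
  refine Nat.sInf_mem (s := {p | 1 ≤ p ∧ f^[p + mapInd f] = f^[mapInd f]}) ⟨l - mapInd f, ?_, ?_⟩
  · omega
  · rwa [Nat.sub_add_cancel hl.le]

end MapFiniteOrder

theorem stmt7_general {X : Type*} (f : X → X) (i p : ℕ)
    (hfin : MapFiniteOrder f) (hi : mapInd f = i) (hp : mapPer f = p) :
    let τ : X × X → X × X := fun q => (q.2, q.1)
    let r : X × X → X × X := τ ∘ Prod.map f f
    (Even p → r^[p + i] = r^[i]) ∧ (Odd p → r^[2 * p + i] = r^[i]) ∧
      MapFiniteOrder r := by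
  intro τ r
  obtain ⟨hp1, hper⟩ := hfin.one_le_mapPer_and_iterate_mapPer_add
  rw [hi, hp] at hper
  rw [hp] at hp1
  have hτ : Involutive τ := fun _ => rfl
  have hcomm : Function.Commute τ (Prod.map f f) := fun _ => rfl
  have hr : ∀ n, Even n → f^[n + i] = f^[i] → r^[n + i] = r^[i] := fun n hn h =>
    hτ.iterate_comp_add_eq hcomm hn (by rw [Prod.map_iterate, Prod.map_iterate, h])
  have hr2 : r^[2 * p + i] = r^[i] := hr _ (even_two_mul p) (iterate_two_mul_add_eq hper)
  exact ⟨fun he => hr p he hper, fun _ => hr2, 2 * p, by omega, i, hr2⟩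

theorem stmt7 {X : Type*} (f : X → X) (i p : ℕ)
    (hfin : MapFiniteOrder f) (hi : mapInd f = i) (hp : mapPer f = p) (hi1 : 1 ≤ i) :
    let τ : X × X → X × X := fun q => (q.2, q.1)
    let r : X × X → X × X := τ ∘ Prod.map f f
    (Even p → r^[p + i] = r^[i]) ∧ (Odd p → r^[2 * p + i] = r^[i]) ∧
      MapFiniteOrder r :=
  stmt7_general f i p hfin hi hp
end

section
/- Let (B, +, ∘) be a left semi-brace and define λ_a(b) := a ∘ (a⁻ + b) for a, b ∈ B. Then λ_{a ∘ b} = λ_a ∘ λ_b for all a, b ∈ B, i.e., λ : (B,∘) → Maps(B,B) satisfies λ_a(λ_b(c)) = λ_{a∘b}(c) for all a, b, c ∈ B. -/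
/-- A left semi-brace: a semigroup operation `add` together with a group
structure `∘` (the multiplication of the `Group` instance) satisfying
`a ∘ (b + c) = a ∘ b + a ∘ (a⁻¹ + c)`. -/
structure IsLeftSemiBrace (B : Type*) [Group B] (add : B → B → B) : Prop where
  add_assoc : ∀ a b c : B, add (add a b) c = add a (add b c)
  semibrace : ∀ a b c : B, a * add b c = add (a * b) (a * add a⁻¹ c)

theorem stmt10 {B : Type*} [Group B] (add : B → B → B)
    (h : IsLeftSemiBrace B add) :
    ∀ a b c : B, (a * b) * add (a * b)⁻¹ c = a * add a⁻¹ (b * add b⁻¹ c) := by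
  intro a b c
  calc (a * b) * add (a * b)⁻¹ c = a * (b * add (b⁻¹ * a⁻¹) c) := by
        rw [mul_inv_rev, mul_assoc]
    _ = a * add a⁻¹ (b * add b⁻¹ c) := by
        rw [h.semibrace, mul_inv_cancel_left]
end

section
/- Let (B, +, ∘) be a left semi-brace with λ_a(b) := a ∘ (a⁻ + b) and ρ_b(a) := (a⁻ + b)⁻ ∘ b, and r_B(a,b) := (λ_a(b), ρ_b(a)). Then λ_{λ_a(b)}(λ_{ρ_b(a)}(c)) = λ_a(λ_b(c)) for all a, b, c ∈ B (the first braid-type identity for r_B holds in any left semi-brace). -/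
/-!
`λ` turns the group law into composition, `λ_{a∘b} = λ_a λ_b`, and `λ_a(b) ∘ ρ_b(a) = a ∘ b`;
hence `λ_{λ_a(b)} λ_{ρ_b(a)} = λ_{λ_a(b) ∘ ρ_b(a)} = λ_{a∘b} = λ_a λ_b`.
-/

namespace IsLeftSemiBrace

variable {B : Type*} [Group B]

def lambda (add : B → B → B) (a b : B) : B := a * add a⁻¹ b

def rho (add : B → B → B) (b a : B) : B := (add a⁻¹ b)⁻¹ * b

theorem lambda_mul_rho (add : B → B → B) (a b : B) : lambda add a b * rho add b a = a * b := by
  simp only [lambda, rho]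
  group

theorem lambda_mul {add : B → B → B} (h : IsLeftSemiBrace B add) (x y z : B) :
    lambda add (x * y) z = lambda add x (lambda add y z) := by
  unfold lambda
  have hyx : y * (y⁻¹ * x⁻¹) = x⁻¹ := by group
  calc (x * y) * add (x * y)⁻¹ z
      = x * (y * add (y⁻¹ * x⁻¹) z) := by rw [mul_inv_rev, mul_assoc]
    _ = x * add x⁻¹ (y * add y⁻¹ z) := by rw [h.semibrace, hyx]

end IsLeftSemiBrace

theorem stmt12 {B : Type*} [Group B] (add : B → B → B)
    (h : IsLeftSemiBrace B add) :
    ∀ a b c : B,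
      letI lam : B → B → B := fun x y => x * add x⁻¹ y
      letI rho : B → B → B := fun y x => (add x⁻¹ y)⁻¹ * y
      lam (lam a b) (lam (rho b a) c) = lam a (lam b c) := by
  intro a b c
  show IsLeftSemiBrace.lambda add (IsLeftSemiBrace.lambda add a b)
      (IsLeftSemiBrace.lambda add (IsLeftSemiBrace.rho add b a) c) =
    IsLeftSemiBrace.lambda add a (IsLeftSemiBrace.lambda add b c)
  rw [← h.lambda_mul, IsLeftSemiBrace.lambda_mul_rho, h.lambda_mul]
end

section
/- Let r be a left non-degenerate set-theoretical solution of the Yang–Baxter equation on a set X (so each λ_x is bijective). Then the derived map r'(x,y) := (y, λ_y(ρ_{λ_x⁻¹(y)}(x))) is again a set-theoretical solution of the Yang–Baxter equation. -/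
/-- The map `r` acting on the first and second components of a triple. -/
def R12 {X : Type*} (r : X × X → X × X) : X × X × X → X × X × X :=
  fun p => ((r (p.1, p.2.1)).1, (r (p.1, p.2.1)).2, p.2.2)

/-- The map `r` acting on the second and third components of a triple. -/
def R23 {X : Type*} (r : X × X → X × X) : X × X × X → X × X × X :=
  fun p => (p.1, (r (p.2.1, p.2.2)).1, (r (p.2.1, p.2.2)).2)

/-- `r` is a set-theoretical solution of the Yang-Baxter equation. -/
def IsYBE {X : Type*} (r : X × X → X × X) : Prop :=
  R12 r ∘ R23 r ∘ R12 r = R23 r ∘ R12 r ∘ R23 r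

/-!
Write `σ_y(x) = λ_y(ρ_{λ_x⁻¹(y)}(x))`, so that `r'(x, y) = (y, σ_y(x))`; such a map is a solution
exactly when `σ_z σ_y = σ_{σ_z(y)} σ_z`. Since the `λ_x` are bijective, every triple can be written
as `(x, λ_x(b), λ_x λ_b(c))`, and whenever `w = λ_a(t)` we have `σ_w(a) = λ_w ρ_t(a)`. With these
representations the three components of the Yang–Baxter equation for `r` reduce both sides of the
braid relation to `λ_z λ_{λ_p(q)} ρ_q(p)`, where `p = ρ_{λ_b(c)}(x)` and `q = ρ_c(b)`.
-/

section

variable {X : Type*}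

theorem isYBE_derived_iff (σ : X → X → X) :
    IsYBE (fun p : X × X => (p.2, σ p.2 p.1)) ↔
      ∀ x y z, σ z (σ y x) = σ (σ z y) (σ z x) := by
  simp only [IsYBE, funext_iff, Function.comp_apply, R12, R23, Prod.forall, Prod.mk.injEq,
    true_and]

variable {lam rho : X → X → X}

theorem isYBE_mk_iff :
    IsYBE (fun p : X × X => (lam p.1 p.2, rho p.2 p.1)) ↔
      (∀ x y z, lam (lam x y) (lam (rho y x) z) = lam x (lam y z)) ∧
      (∀ x y z, rho (lam (rho y x) z) (lam x y) = lam (rho (lam y z) x) (rho z y)) ∧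
      (∀ x y z, rho z (rho y x) = rho (rho z y) (rho (lam y z) x)) := by
  simp only [IsYBE, funext_iff, Function.comp_apply, R12, R23, Prod.forall, Prod.mk.injEq,
    forall_and]

noncomputable def derivedSigma [Nonempty X] (lam rho : X → X → X) (y x : X) : X :=
  lam y (rho (Function.invFun (lam x) y) x)

theorem derivedSigma_of_lam_eq [Nonempty X] {a t z : X} (hinj : Function.Injective (lam a))
    (h : lam a t = z) : derivedSigma lam rho z a = lam z (rho t a) := by
  rw [derivedSigma, ← h, Function.leftInverse_invFun hinj]

local notation "σ" => derivedSigma lam rho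

theorem derivedSigma_braid [Nonempty X]
    (hr : IsYBE (fun p : X × X => (lam p.1 p.2, rho p.2 p.1)))
    (hnd : ∀ x, Function.Bijective (lam x)) (x y z : X) :
    σ z (σ y x) = σ (σ z y) (σ z x) := by
  obtain ⟨h1, h2, h3⟩ := isYBE_mk_iff.mp hr
  obtain ⟨b, hy⟩ := (hnd x).2 y
  obtain ⟨d, hz⟩ := (hnd x).2 z
  obtain ⟨c, rfl⟩ := (hnd b).2 d
  set u := rho b x
  set p := rho (lam b c) x
  set q := rho c b
  have hz' : lam y (lam u c) = z := by rw [← hy, h1, hz]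
  have hzy : σ z y = lam z (lam p q) := by
    rw [derivedSigma_of_lam_eq (hnd _).1 hz', ← hy, h2]
  calc σ z (σ y x)
      = lam z (rho (lam (rho u y) c) (lam y u)) := by
        rw [derivedSigma_of_lam_eq (hnd _).1 hy,
          derivedSigma_of_lam_eq (hnd _).1 ((h1 y u c).trans hz')]
    _ = lam z (lam (lam p q) (rho q p)) := by rw [h2, ← hy, h2, h3]
    _ = lam (lam z (lam p q)) (lam (rho (lam p q) z) (rho q p)) := (h1 z (lam p q) (rho q p)).symm
    _ = σ (σ z y) (σ z x) := by
        rw [hzy, derivedSigma_of_lam_eq (hnd _).1 hz,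
          derivedSigma_of_lam_eq (hnd _).1 (h1 z p q), h2]

theorem isYBE_derived [Nonempty X]
    (hr : IsYBE (fun p : X × X => (lam p.1 p.2, rho p.2 p.1)))
    (hnd : ∀ x, Function.Bijective (lam x)) :
    IsYBE (fun p : X × X => (p.2, derivedSigma lam rho p.2 p.1)) :=
  (isYBE_derived_iff _).mpr fun x y z => derivedSigma_braid hr hnd x y z

end

theorem stmt15 {X : Type*} [Nonempty X] (r : X × X → X × X)
    (hr : IsYBE r)
    (lam : X → X → X) (rho : X → X → X)
    (hlam : ∀ x y, lam x y = (r (x, y)).1)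
    (hrho : ∀ x y, rho y x = (r (x, y)).2)
    (hnd : ∀ x, Function.Bijective (lam x)) :
    IsYBE (fun p : X × X =>
      (p.2, lam p.2 (rho (Function.invFun (lam p.1) p.2) p.1))) := by
  obtain rfl : r = fun p => (lam p.1 p.2, rho p.2 p.1) :=
    funext fun p => Prod.ext (hlam p.1 p.2).symm (hrho p.1 p.2).symm
  exact isYBE_derived hr hnd
end
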